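/- arXiv:2502.21090 — 2 statements merged into one kernel-verified Lean document; each statement's English description precedes it below -/
import Mathlib

section
/- Let k be a field, X a smooth proper variety over k, and suppose X is retract rational, i.e., there are rational maps f : X ⇢ P^n_k and g : P^n_k ⇢ X with g ∘ f defined and equal to the identity as a rational map. Then for any covariant functor F from smooth proper k-varieties and dominant rational maps to the category of sets which sends birational maps and the projections X × P^m → X to bijections, the map F(X) → F(Spec k) induced by the structure morphism is a bijection. -/
open CategoryTheory

theorem stable_birational_invariant_of_retract_rational
    {C : Type*} [Category C] {w : Type*}
    (F : C ⥤ Type w) (pt : C) (hpt : Limits.IsTerminal pt) (Pn : ℕ → C)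
    -- `F` sends the structure maps of the projective spaces to bijections
    (hP : ∀ n : ℕ, Function.Bijective (F.map (hpt.from (Pn n))))
    -- retract rationality: the identity of `X` factors through some `ℙ^n`
    (X : C) (n : ℕ) (f : X ⟶ Pn n) (g : Pn n ⟶ X) (hfg : f ≫ g = 𝟙 X) :
    Function.Bijective (F.map (hpt.from X)) := by
  have h1 : hpt.from X = f ≫ hpt.from (Pn n) := hpt.hom_ext _ _
  have h2 : hpt.from (Pn n) = g ≫ hpt.from X := hpt.hom_ext _ _
  have hq : F.map (hpt.from X) = F.map (hpt.from (Pn n)) ∘ F.map f := by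
    rw [h1, F.map_comp]; rfl
  have hp : F.map (hpt.from (Pn n)) = F.map (hpt.from X) ∘ F.map g := by
    rw [h2, F.map_comp]; rfl
  have hba : ∀ x, F.map g (F.map f x) = x := by
    intro x
    have := congrArg (fun (φ : F.obj X ⟶ F.obj X) => φ x) (by rw [← F.map_comp, hfg, F.map_id] : F.map f ≫ F.map g = 𝟙 _)
    simpa using this
  constructor
  · intro x y hxy
    rw [hq] at hxy
    have := (hP n).1 hxy
    calc x = F.map g (F.map f x) := (hba x).symm
    _ = F.map g (F.map f y) := by rw [this]
    _ = y := hba y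
  · intro z
    obtain ⟨u, hu⟩ := (hP n).2 z
    exact ⟨F.map g u, by rw [← hu, hp]; rfl⟩
end

section
/- Let P be a finite poset and let λ : Sd(P) → P be the last vertex map from the barycentric subdivision poset to P, in the presence of a linear ordering structure as follows: each σ ∈ P has a finite vertex set Vert(σ) in a linearly ordered set V with σ ↦ max(Vert(σ)) monotone. For a strictly increasing chain σ = (σ_0 < ⋯ < σ_n), the tuple (max(σ_0), …, max(σ_n)) is weakly increasing, and the composite of the chain-level subdivision map followed by the last vertex map is the identity on nondegenerate tuples: for any strictly increasing chain σ and any nonidentity permutation g of {0,…,n}, the tuple (max applied to the g-reordered partial chains) contains a repetition. -/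
/-!
Write `p (g i)` for the vertices in the order given by `g`. Since `p` is monotone, the
maximum of `p` over the first `k + 1` of them is `p (f k)`, where `f k` is the largest of
`g 0, …, g k`; this makes the tuple of maxima monotone and equal to `p` when `g = 1`.
If it is injective, so is the monotone map `f`, which forces `f = id` on a finite linear
order; hence `g k ≤ k` for every `k`, and a permutation that never moves a point upwards
is the identity.
-/

open Finset

section PrefixMax

variable {ι α β : Type*} [Preorder ι] [LocallyFiniteOrderBot ι] [LinearOrder α] [LinearOrder β]

def prefixMax (u : ι → α) (k : ι) : α :=
  (Iic k).sup' nonempty_Iic u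

theorem le_prefixMax (u : ι → α) (k : ι) : u k ≤ prefixMax u k :=
  le_sup' u (mem_Iic.2 le_rfl)

theorem monotone_prefixMax (u : ι → α) : Monotone (prefixMax u) :=
  fun _ _ hab => sup'_mono u (Iic_subset_Iic.2 hab) nonempty_Iic

theorem prefixMax_eq_self {u : ι → α} (hu : Monotone u) : prefixMax u = u :=
  funext fun k => le_antisymm (sup'_le _ _ fun _ hi => hu (mem_Iic.1 hi)) (le_prefixMax u k)

theorem Monotone.prefixMax_comp {p : α → β} (hp : Monotone p) (u : ι → α) :
    prefixMax (p ∘ u) = p ∘ prefixMax u :=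
  funext fun _ => (apply_sup'_eq_sup'_comp nonempty_Iic p fun _ _ => hp.map_max).symm

end PrefixMax

theorem Equiv.Perm.eq_one_of_forall_apply_le {ι : Type*} [LinearOrder ι] [WellFoundedLT ι]
    (g : Equiv.Perm ι) (hg : ∀ k, g k ≤ k) : g = 1 := by
  ext k
  induction k using WellFoundedLT.induction with
  | _ k ih =>
    by_contra hne
    have hlt : g k < k := (hg k).lt_of_ne hne
    -- `g` fixes the smaller point `g k`, so `g (g k) = g k`.
    exact hne (g.injective (ih (g k) hlt))

theorem eq_one_of_injective_prefixMax {ι : Type*} [LinearOrder ι] [LocallyFiniteOrderBot ι]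
    [Finite ι] {g : Equiv.Perm ι} (hinj : Function.Injective (prefixMax g)) : g = 1 := by
  have hid : prefixMax g = id := ((monotone_prefixMax g).strictMono_of_injective hinj).eq_id
  refine g.eq_one_of_forall_apply_le fun k => ?_
  simpa [hid] using le_prefixMax g k

theorem last_vertex_of_subdivision
    {V : Type*} [LinearOrder V] {n : ℕ} (p : Fin (n + 1) → V) (hp : StrictMono p)
    (g : Equiv.Perm (Fin (n + 1))) :
    -- the tuple of successive maxima is weakly increasing
    Monotone (fun k : Fin (n + 1) =>
      (Finset.Iic k).sup' Finset.nonempty_Iic fun i => p (g i)) ∧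
    -- for the identity permutation it is the original nondegenerate tuple
    (g = 1 → (fun k : Fin (n + 1) =>
      (Finset.Iic k).sup' Finset.nonempty_Iic fun i => p (g i)) = p) ∧
    -- for any other permutation it contains a repetition
    (g ≠ 1 → ¬ Function.Injective (fun k : Fin (n + 1) =>
      (Finset.Iic k).sup' Finset.nonempty_Iic fun i => p (g i))) := by
  change Monotone (prefixMax (p ∘ g)) ∧ (g = 1 → prefixMax (p ∘ g) = p) ∧
    (g ≠ 1 → ¬ Function.Injective (prefixMax (p ∘ g)))
  rw [hp.monotone.prefixMax_comp]
  refine ⟨hp.monotone.comp (monotone_prefixMax g), ?_, fun hg hinj => hg ?_⟩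
  · rintro rfl
    rw [Equiv.Perm.coe_one, prefixMax_eq_self monotone_id, Function.comp_id]
  · exact eq_one_of_injective_prefixMax hinj.of_comp
end
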